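/- arXiv:1702.00339 — 2 statements merged into one kernel-verified Lean document; each statement's English description precedes it below -/
import Mathlib

section
/- Let A = Σ_{k₁,k₂,k₃} π_{L₁}^{k₁} ⊗ π_{L₂}^{k₂} ⊗ π_{L₃}^{k₃} ⊗ A_{k₁k₂k₃} be a three-level block circulant matrix whose blocks are rank-1 Hadamard separable, i.e. A_{k₁k₂k₃} = A^{(1)}_{k₁} ∘ A^{(2)}_{k₂} ∘ A^{(3)}_{k₃} with A^{(ℓ)}_{k} ∈ ℂ^{m₀×m₀} for 0 ≤ k ≤ L_ℓ − 1. Then A = (F_𝐋^* ⊗ I_{m₀}) · D_A · (F_𝐋 ⊗ I_{m₀}) with F_𝐋 = F_{L₁} ⊗ F_{L₂} ⊗ F_{L₃}, where D_A is block diagonal and its diagonal block indexed by (j₁, j₂, j₃) factorizes as the Hadamard product Ā^{(1)}_{j₁} ∘ Ā^{(2)}_{j₂} ∘ Ā^{(3)}_{j₃}, where Ā^{(ℓ)}_{j} = Σ_{k=0}^{L_ℓ−1} ω_{L_ℓ}^{jk} A^{(ℓ)}_{k} are the one-dimensional Fourier transforms of the factor sequences. -/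
open Matrix Complex
open scoped Matrix Kronecker

noncomputable section

/-- `ω_L = exp(-2πi/L)`. -/
def omg (L : ℕ) : ℂ := Complex.exp (-(2 * Real.pi * Complex.I) / L)

/-- The unitary Fourier matrix `F_L` with entries `ω_L^{(k-1)(l-1)}/√L`. -/
def Fmat (L : ℕ) : Matrix (Fin L) (Fin L) ℂ :=
  Matrix.of fun k l : Fin L => omg L ^ ((k : ℕ) * (l : ℕ)) / (Real.sqrt L : ℂ)

/-- The cyclic downward shift matrix `π_L`. -/
def shiftMat (L : ℕ) : Matrix (Fin L) (Fin L) ℂ :=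
  Matrix.of fun i j : Fin L => if (i : ℕ) = ((j : ℕ) + 1) % L then 1 else 0

/-- The block diagonal matrix with `m₀ × m₀` diagonal blocks `X_j`, indexed by
an arbitrary (multi-)index type `ι`. -/
def bdiagOn {ι : Type} [DecidableEq ι] (m₀ : ℕ)
    (X : ι → Matrix (Fin m₀) (Fin m₀) ℂ) :
    Matrix (ι × Fin m₀) (ι × Fin m₀) ℂ :=
  Matrix.of fun p q => if p.1 = q.1 then X p.1 p.2 q.2 else 0

/-! The Fourier matrix diagonalizes the cyclic shift, `F_L π_L = diag(ω_L^t) F_L`, and it is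
unitary, so `π_L^k = F_L^* diag(ω_L^{tk}) F_L`. Since the Kronecker product is multiplicative,
each term `π^{k₁} ⊗ π^{k₂} ⊗ π^{k₃} ⊗ B` becomes
`(F^* ⊗ I) (diag(ω^{j₁k₁} ω^{j₂k₂} ω^{j₃k₃}) ⊗ B) (F ⊗ I)`, and after summing over `k` the
product weight `ω^{j₁k₁} ω^{j₂k₂} ω^{j₃k₃}` splits across the three Hadamard factors of the
separable blocks. -/

lemma sum_fin_pow_of_pow_eq_one {K : Type*} [Field K] [DecidableEq K] {r : K} {L : ℕ}
    (hr : r ^ L = 1) :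
    ∑ t : Fin L, r ^ (t : ℕ) = if r = 1 then (L : K) else 0 := by
  split_ifs with h
  · simp [h]
  · rw [Fin.sum_univ_eq_sum_range (r ^ ·), geom_sum_eq h, hr, sub_self, zero_div]

lemma omg_isPrimitiveRoot (L : ℕ) [NeZero L] : IsPrimitiveRoot (omg L) L := by
  have h : omg L = (Complex.exp (2 * Real.pi * Complex.I / L))⁻¹ := by
    rw [omg, ← Complex.exp_neg, neg_div]
  exact h ▸ (Complex.isPrimitiveRoot_exp L (NeZero.ne L)).inv

lemma star_omg (L : ℕ) [NeZero L] : star (omg L) = (omg L)⁻¹ :=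
  (Complex.inv_eq_conj <| Complex.norm_eq_one_of_pow_eq_one
    (omg_isPrimitiveRoot L).pow_eq_one (NeZero.ne L)).symm

lemma Fmat_conjTranspose_mul_self (L : ℕ) : (Fmat L)ᴴ * Fmat L = 1 := by
  ext i j
  have : NeZero L := ⟨i.pos.ne'⟩
  have hω := omg_isPrimitiveRoot L
  have hω0 : omg L ≠ 0 := hω.ne_zero (NeZero.ne L)
  set r := omg L ^ (j : ℕ) / omg L ^ (i : ℕ)
  have hr : r ^ L = 1 := by
    rw [div_pow, ← pow_mul, ← pow_mul, mul_comm, pow_mul, mul_comm (i : ℕ), pow_mul,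
      hω.pow_eq_one, one_pow, one_pow, div_one]
  have hLC : (L : ℂ) ≠ 0 := Nat.cast_ne_zero.mpr (NeZero.ne L)
  calc ((Fmat L)ᴴ * Fmat L) i j = (∑ t : Fin L, r ^ (t : ℕ)) / L := by
        simp only [mul_apply, conjTranspose_apply, Fmat, of_apply, star_div₀, star_pow,
          star_omg, Finset.sum_div]
        refine Finset.sum_congr rfl fun t _ => ?_
        have hL : ((√L : ℝ) : ℂ) * (√L : ℝ) = L := by
          rw [← Complex.ofReal_mul, Real.mul_self_sqrt (Nat.cast_nonneg L), Complex.ofReal_natCast]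
        rw [Complex.star_def, Complex.conj_ofReal, div_mul_div_comm, hL]
        simp only [r, div_pow, ← pow_mul, inv_pow]
        ring
    _ = (1 : Matrix (Fin L) (Fin L) ℂ) i j := by
        have hr1 : r = 1 ↔ i = j := by
          rw [div_eq_one_iff_eq (pow_ne_zero _ hω0)]
          exact ⟨fun h => Fin.ext (hω.pow_inj i.isLt j.isLt h.symm), fun h => h ▸ rfl⟩
        simp only [sum_fin_pow_of_pow_eq_one hr, one_apply, hr1]
        split_ifs <;> simp [hLC]

lemma Fmat_mul_shiftMat (L : ℕ) :
    Fmat L * shiftMat L = diagonal (fun t : Fin L => omg L ^ (t : ℕ)) * Fmat L := by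
  ext t j
  have : NeZero L := ⟨t.pos.ne'⟩
  let j' : Fin L := ⟨((j : ℕ) + 1) % L, Nat.mod_lt _ (NeZero.pos L)⟩
  have hcol : ∀ i : Fin L, ((i : ℕ) = ((j : ℕ) + 1) % L) ↔ i = j' := fun i => by
    simp [j', Fin.ext_iff]
  have hωt : (omg L ^ (t : ℕ)) ^ L = 1 := by
    rw [← pow_mul, mul_comm, pow_mul, (omg_isPrimitiveRoot L).pow_eq_one, one_pow]
  rw [diagonal_mul]
  simp only [mul_apply, shiftMat, of_apply, mul_ite, mul_one, mul_zero, hcol,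
    Finset.sum_ite_eq', Finset.mem_univ, if_true, Fmat]
  rw [pow_mul, ← pow_eq_pow_mod _ hωt, pow_succ, ← pow_mul]
  ring

lemma shiftMat_pow_eq (L k : ℕ) :
    shiftMat L ^ k = (Fmat L)ᴴ * diagonal (fun t : Fin L => omg L ^ ((t : ℕ) * k)) * Fmat L := by
  have hsemiconj : SemiconjBy (Fmat L) (shiftMat L) (diagonal fun t : Fin L => omg L ^ (t : ℕ)) :=
    Fmat_mul_shiftMat L
  calc shiftMat L ^ k = (Fmat L)ᴴ * Fmat L * shiftMat L ^ k := by
        rw [Fmat_conjTranspose_mul_self, one_mul]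
    _ = _ := by
        rw [mul_assoc, (hsemiconj.pow_right k).eq, diagonal_pow, ← mul_assoc]
        simp only [Pi.pow_def, ← pow_mul]

lemma diagonal_kronecker_eq_bdiagOn {ι : Type} [DecidableEq ι] {m₀ : ℕ} (d : ι → ℂ)
    (B : Matrix (Fin m₀) (Fin m₀) ℂ) : diagonal d ⊗ₖ B = bdiagOn m₀ (fun j => d j • B) := by
  ext p q
  simp only [kroneckerMap_apply, diagonal_apply, bdiagOn, of_apply, Matrix.smul_apply, smul_eq_mul]
  split_ifs <;> simp [*]

lemma sum_bdiagOn {κ ι : Type} [DecidableEq ι] {m₀ : ℕ} (s : Finset κ)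
    (X : κ → ι → Matrix (Fin m₀) (Fin m₀) ℂ) :
    ∑ k ∈ s, bdiagOn m₀ (X k) = bdiagOn m₀ (fun j => ∑ k ∈ s, X k j) := by
  ext p q
  simp only [Matrix.sum_apply, bdiagOn, of_apply]
  split_ifs <;> simp

lemma sum_hadamard {κ m n α : Type*} [NonUnitalNonAssocSemiring α] (s : Finset κ)
    (A : κ → Matrix m n α) (B : Matrix m n α) : (∑ k ∈ s, A k) ⊙ B = ∑ k ∈ s, A k ⊙ B := by
  ext i j
  simp only [hadamard_apply, Matrix.sum_apply, Finset.sum_mul]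

lemma sum_smul_hadamard_sum_smul {κ κ' m n α : Type*} [CommSemiring α] (s : Finset κ)
    (t : Finset κ') (c : κ → α) (A : κ → Matrix m n α) (d : κ' → α) (B : κ' → Matrix m n α) :
    (∑ k ∈ s, c k • A k) ⊙ (∑ k' ∈ t, d k' • B k') =
      ∑ k ∈ s, ∑ k' ∈ t, (c k * d k') • (A k ⊙ B k') := by
  ext i j
  simp only [hadamard_apply, Matrix.sum_apply, Matrix.smul_apply, smul_eq_mul,
    Finset.sum_mul_sum]
  exact Finset.sum_congr rfl fun k _ => Finset.sum_congr rfl fun k' _ => by ring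

lemma mul_mul_kronecker_eq {l m n p q r α : Type*} [Fintype m] [Fintype n] [Fintype q]
    [Fintype r] [DecidableEq q] [DecidableEq r] [CommSemiring α] (P : Matrix l m α)
    (D : Matrix m n α) (Q : Matrix n p α) (B : Matrix q r α) :
    (P * D * Q) ⊗ₖ B = (P ⊗ₖ (1 : Matrix q q α)) * (D ⊗ₖ B) * (Q ⊗ₖ (1 : Matrix r r α)) := by
  rw [← mul_kronecker_mul, ← mul_kronecker_mul, Matrix.one_mul, Matrix.mul_one]

theorem separable_bcirc_block_diagonalization_general (L₁ L₂ L₃ m₀ : ℕ)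
    (A₁ : Fin L₁ → Matrix (Fin m₀) (Fin m₀) ℂ)
    (A₂ : Fin L₂ → Matrix (Fin m₀) (Fin m₀) ℂ)
    (A₃ : Fin L₃ → Matrix (Fin m₀) (Fin m₀) ℂ) :
    (∑ k₁ : Fin L₁, ∑ k₂ : Fin L₂, ∑ k₃ : Fin L₃,
        (shiftMat L₁ ^ (k₁ : ℕ)) ⊗ₖ (shiftMat L₂ ^ (k₂ : ℕ)) ⊗ₖ (shiftMat L₃ ^ (k₃ : ℕ))
          ⊗ₖ (A₁ k₁ ⊙ A₂ k₂ ⊙ A₃ k₃)) =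
      ((Fmat L₁ ⊗ₖ Fmat L₂ ⊗ₖ Fmat L₃)ᴴ ⊗ₖ (1 : Matrix (Fin m₀) (Fin m₀) ℂ)) *
        bdiagOn m₀ (fun j : (Fin L₁ × Fin L₂) × Fin L₃ =>
          (∑ k : Fin L₁, omg L₁ ^ ((j.1.1 : ℕ) * (k : ℕ)) • A₁ k) ⊙
          (∑ k : Fin L₂, omg L₂ ^ ((j.1.2 : ℕ) * (k : ℕ)) • A₂ k) ⊙
          (∑ k : Fin L₃, omg L₃ ^ ((j.2 : ℕ) * (k : ℕ)) • A₃ k)) *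
        ((Fmat L₁ ⊗ₖ Fmat L₂ ⊗ₖ Fmat L₃) ⊗ₖ (1 : Matrix (Fin m₀) (Fin m₀) ℂ)) := by
  simp only [shiftMat_pow_eq, mul_kronecker_mul, ← conjTranspose_kronecker,
    diagonal_kronecker_diagonal]
  simp only [mul_mul_kronecker_eq, diagonal_kronecker_eq_bdiagOn]
  simp only [← Finset.mul_sum, ← Finset.sum_mul, sum_bdiagOn]
  congr 3
  funext j
  rw [sum_smul_hadamard_sum_smul, sum_hadamard]
  simp_rw [sum_smul_hadamard_sum_smul]

/-- Block diagonalization of a three-level block circulant matrix with rank-1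
Hadamard-separable blocks `A_{k₁k₂k₃} = A^{(1)}_{k₁} ∘ A^{(2)}_{k₂} ∘ A^{(3)}_{k₃}`:
the diagonal block indexed by `(j₁,j₂,j₃)` factorizes as the Hadamard product
`Ā^{(1)}_{j₁} ∘ Ā^{(2)}_{j₂} ∘ Ā^{(3)}_{j₃}` of the 1D Fourier transforms
`Ā^{(ℓ)}_j = Σ_k ω_{L_ℓ}^{jk} A^{(ℓ)}_k`. -/
theorem separable_bcirc_block_diagonalization (L₁ L₂ L₃ m₀ : ℕ)
    (h₁ : 1 ≤ L₁) (h₂ : 1 ≤ L₂) (h₃ : 1 ≤ L₃)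
    (A₁ : Fin L₁ → Matrix (Fin m₀) (Fin m₀) ℂ)
    (A₂ : Fin L₂ → Matrix (Fin m₀) (Fin m₀) ℂ)
    (A₃ : Fin L₃ → Matrix (Fin m₀) (Fin m₀) ℂ) :
    (∑ k₁ : Fin L₁, ∑ k₂ : Fin L₂, ∑ k₃ : Fin L₃,
        (shiftMat L₁ ^ (k₁ : ℕ)) ⊗ₖ (shiftMat L₂ ^ (k₂ : ℕ)) ⊗ₖ (shiftMat L₃ ^ (k₃ : ℕ))
          ⊗ₖ (A₁ k₁ ⊙ A₂ k₂ ⊙ A₃ k₃)) =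
      ((Fmat L₁ ⊗ₖ Fmat L₂ ⊗ₖ Fmat L₃)ᴴ ⊗ₖ (1 : Matrix (Fin m₀) (Fin m₀) ℂ)) *
        bdiagOn m₀ (fun j : (Fin L₁ × Fin L₂) × Fin L₃ =>
          (∑ k : Fin L₁, omg L₁ ^ ((j.1.1 : ℕ) * (k : ℕ)) • A₁ k) ⊙
          (∑ k : Fin L₂, omg L₂ ^ ((j.1.2 : ℕ) * (k : ℕ)) • A₂ k) ⊙
          (∑ k : Fin L₃, omg L₃ ^ ((j.2 : ℕ) * (k : ℕ)) • A₃ k)) *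
        ((Fmat L₁ ⊗ₖ Fmat L₂ ⊗ₖ Fmat L₃) ⊗ₖ (1 : Matrix (Fin m₀) (Fin m₀) ℂ)) :=
  separable_bcirc_block_diagonalization_general L₁ L₂ L₃ m₀ A₁ A₂ A₃
end
end

section
/- Let A be a three-level block circulant matrix with rank-1 Hadamard separable blocks A_{k₁k₂k₃} = A^{(1)}_{k₁} ∘ A^{(2)}_{k₂} ∘ A^{(3)}_{k₃}. Then the set of eigenvalues of A equals the union over all multi-indices (j₁, j₂, j₃) with 0 ≤ j_ℓ ≤ L_ℓ − 1 of the sets of eigenvalues of the m₀×m₀ Hadamard products Ā^{(1)}_{j₁} ∘ Ā^{(2)}_{j₂} ∘ Ā^{(3)}_{j₃}, where Ā^{(ℓ)}_{j} = Σ_{k=0}^{L_ℓ−1} ω_{L_ℓ}^{jk} A^{(ℓ)}_{k}. -/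
/-!
The block circulant matrix acts on `x : G × Fin m₀ → ℂ`, with `G = ℤ/L₁ × ℤ/L₂ × ℤ/L₃`, as the
convolution `x ↦ (i ↦ ∑ₖ B k *ᵥ x (i - k))` with the matrix kernel `B k = A₁ k₁ ⊙ A₂ k₂ ⊙ A₃ k₃`.
For a character `ψ` of `G`, the Fourier coefficient `∑ᵢ ψ i • x i` of an eigenvector is an
eigenvector of `∑ₖ ψ k • B k` for the same eigenvalue, and it is nonzero for some `ψ` because the
characters separate functions on `G`; conversely `i ↦ ψ (-i) • u` lifts an eigenvector `u` of
`∑ₖ ψ k • B k`. The characters of `G` are exactly `k ↦ ∏ ω_{L_ℓ}^{j_ℓ k_ℓ}`, and against such a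
product character the separable kernel transforms into `Ā₁ ⊙ Ā₂ ⊙ Ā₃`.
-/

open Matrix Complex
open scoped Matrix Kronecker

noncomputable section

namespace AddChar

section Coprod

variable {A B M : Type*} [AddMonoid A] [AddMonoid B] [CommMonoid M]

def coprod (ψ₁ : AddChar A M) (ψ₂ : AddChar B M) : AddChar (A × B) M where
  toFun x := ψ₁ x.1 * ψ₂ x.2
  map_zero_eq_one' := by simp
  map_add_eq_mul' x y := by
    simp only [Prod.fst_add, Prod.snd_add, map_add_eq_mul]
    exact mul_mul_mul_comm ..

@[simp]
theorem coprod_apply (ψ₁ : AddChar A M) (ψ₂ : AddChar B M) (x : A × B) :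
    ψ₁.coprod ψ₂ x = ψ₁ x.1 * ψ₂ x.2 := rfl

theorem coprod_surjective :
    Function.Surjective (Function.uncurry (coprod : AddChar A M → AddChar B M → _)) :=
  fun ψ => ⟨(ψ.compAddMonoidHom (.inl A B), ψ.compAddMonoidHom (.inr A B)), by
    ext ⟨a, b⟩
    simp [← map_add_eq_mul]⟩

theorem sum_coprod_smul_hadamard {R m n : Type*} [CommSemiring R] [Fintype A] [Fintype B]
    {ψ₁ : AddChar A R} {ψ₂ : AddChar B R} (C : A → Matrix m n R) (D : B → Matrix m n R) :
    ∑ k : A × B, ψ₁.coprod ψ₂ k • (C k.1 ⊙ D k.2) = (∑ a, ψ₁ a • C a) ⊙ (∑ b, ψ₂ b • D b) := by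
  ext p q
  simp only [Matrix.sum_apply, hadamard_apply, Matrix.smul_apply, smul_eq_mul, coprod_apply,
    Fintype.sum_prod_type, Finset.sum_mul_sum]
  exact Finset.sum_congr rfl fun _ _ => Finset.sum_congr rfl fun _ _ => by ring

end Coprod

theorem eq_zero_of_forall_sum_smul_eq_zero {G E : Type*} [AddCommGroup G] [Fintype G]
    [AddCommGroup E] [Module ℂ E] {f : G → E} (h : ∀ ψ : AddChar G ℂ, ∑ i, ψ i • f i = 0) :
    f = 0 := by
  classical
  ext i₀
  -- orthogonality of characters: `∑ ψ, ψ (i - i₀)` vanishes unless `i = i₀`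
  have hinv : ∑ ψ : AddChar G ℂ, ψ (-i₀) • ∑ i, ψ i • f i = (Fintype.card G : ℂ) • f i₀ := by
    simp_rw [Finset.smul_sum, smul_smul, ← map_add_eq_mul]
    rw [Finset.sum_comm]
    simp_rw [← Finset.sum_smul, sum_apply_eq_ite, neg_add_eq_zero, ite_smul, zero_smul]
    simp
  have hcard : (Fintype.card G : ℂ) • f i₀ = 0 := by simp [← hinv, h]
  exact (smul_eq_zero.mp hcard).resolve_left (by simp)

end AddChar

namespace Matrix

variable {R G n : Type*} [AddCommGroup G]

section Circulant

variable [Semiring R] [DecidableEq G]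

theorem circulant_single_one_mul_circulant_single_one [Fintype G] (a b : G) :
    circulant (Pi.single a 1 : G → R) * circulant (Pi.single b 1) =
      circulant (Pi.single (a + b) 1) := by
  ext i j
  simp only [mul_apply, circulant_apply, Pi.single_apply, ite_zero_mul_ite_zero, mul_one]
  rw [Finset.sum_eq_single (i - a)
    (fun t _ ht => if_neg fun h => ht (by rw [← h.1, sub_sub_cancel])) (by simp)]
  grind

theorem circulant_single_one_kronecker_circulant_single_one {H : Type*} [AddCommGroup H]
    [DecidableEq H] (a : G) (b : H) :
    circulant (Pi.single a 1 : G → R) ⊗ₖ circulant (Pi.single b 1 : H → R) =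
      circulant (Pi.single (a, b) 1) := by
  ext ⟨i₁, i₂⟩ ⟨j₁, j₂⟩
  simp only [kroneckerMap_apply, circulant_apply, Pi.single_apply, ite_zero_mul_ite_zero, mul_one,
    Prod.mk_sub_mk, Prod.mk.injEq]

theorem circulant_single_one_kronecker_mulVec_apply [Fintype G] [Fintype n] (k : G)
    (B : Matrix n n R) (x : G × n → R) (i : G) (p : n) :
    ((circulant (Pi.single k 1) ⊗ₖ B) *ᵥ x) (i, p) = (B *ᵥ fun q => x (i - k, q)) p := by
  have hsub (j : G) : i - j = k ↔ j = i - k := by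
    rw [eq_sub_iff_add_eq, sub_eq_iff_eq_add', eq_comm]
  simp [mulVec, dotProduct, Fintype.sum_prod_type, kroneckerMap_apply, circulant_apply,
    Pi.single_apply, ite_mul, hsub]

/-- Its `((i, p), (j, q))` entry is `B (i - j) p q`. -/
def blockCirculant [Fintype G] (B : G → Matrix n n R) : Matrix (G × n) (G × n) R :=
  ∑ k, circulant (Pi.single k 1) ⊗ₖ B k

theorem blockCirculant_mulVec_apply [Fintype G] [Fintype n] (B : G → Matrix n n R)
    (x : G × n → R) (i : G) :
    (fun p => (blockCirculant B *ᵥ x) (i, p)) = ∑ k, B k *ᵥ fun q => x (i - k, q) := by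
  ext p
  simp only [blockCirculant, sum_mulVec, Finset.sum_apply,
    circulant_single_one_kronecker_mulVec_apply]

end Circulant

variable [Fintype G] [Fintype n]

theorem sum_addChar_smul_mulVec_sum (ψ : AddChar G ℂ) (B : G → Matrix n n ℂ) (f : G → n → ℂ) :
    (∑ k, ψ k • B k) *ᵥ ∑ i, ψ i • f i = ∑ i, ψ i • ∑ k, B k *ᵥ f (i - k) :=
  calc (∑ k, ψ k • B k) *ᵥ ∑ i, ψ i • f i = ∑ k, ∑ i, ψ (k + i) • B k *ᵥ f i := by
        rw [mulVec_sum, Finset.sum_comm]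
        simp only [mulVec_smul, sum_mulVec, smul_mulVec, Finset.smul_sum, smul_smul,
          AddChar.map_add_eq_mul, mul_comm]
    _ = ∑ k, ∑ i, ψ i • B k *ᵥ f (i - k) :=
        Finset.sum_congr rfl fun k _ =>
          Fintype.sum_equiv (Equiv.addLeft k) _ _ fun i => by simp
    _ = ∑ i, ψ i • ∑ k, B k *ᵥ f (i - k) := by
        rw [Finset.sum_comm]
        simp only [Finset.smul_sum]

theorem exists_blockCirculant_mulVec_eq_smul_iff [DecidableEq G] (B : G → Matrix n n ℂ)
    (lam : ℂ) :
    (∃ x : G × n → ℂ, x ≠ 0 ∧ blockCirculant B *ᵥ x = lam • x) ↔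
      ∃ ψ : AddChar G ℂ, ∃ u : n → ℂ, u ≠ 0 ∧ (∑ k, ψ k • B k) *ᵥ u = lam • u := by
  constructor
  · rintro ⟨x, hx, hxlam⟩
    have hconv (i : G) : ∑ k, B k *ᵥ (fun q => x (i - k, q)) = lam • fun q => x (i, q) := by
      rw [← blockCirculant_mulVec_apply, hxlam]
      rfl
    obtain ⟨ψ, hψ⟩ : ∃ ψ : AddChar G ℂ, ∑ i, ψ i • (fun q => x (i, q)) ≠ 0 := by
      by_contra! h
      have h0 := AddChar.eq_zero_of_forall_sum_smul_eq_zero h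
      exact hx (funext fun iq => congr_fun (congr_fun h0 iq.1) iq.2)
    refine ⟨ψ, _, hψ, ?_⟩
    simp only [sum_addChar_smul_mulVec_sum, hconv, smul_comm _ lam, ← Finset.smul_sum]
  · rintro ⟨ψ, u, hu, hψu⟩
    set x : G × n → ℂ := fun iq => ψ (-iq.1) * u iq.2
    refine ⟨x, fun h => hu (funext fun q => by simpa [x] using congr_fun h (0, q)), ?_⟩
    ext ⟨i, p⟩
    have hshift (k : G) : (fun q => x (i - k, q)) = (ψ (-i) * ψ k) • u := by
      ext q
      simp [x, ← AddChar.map_add_eq_mul, sub_eq_neg_add]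
    have hrow : (fun q => (blockCirculant B *ᵥ x) (i, q)) = ψ (-i) • lam • u := by
      rw [blockCirculant_mulVec_apply, ← hψu, sum_mulVec, Finset.smul_sum]
      simp only [hshift, mulVec_smul, smul_mulVec, smul_smul]
    refine (congr_fun hrow p).trans ?_
    simp only [Pi.smul_apply, smul_eq_mul, x]
    ring

end Matrix

theorem isPrimitiveRoot_omg {L : ℕ} (hL : L ≠ 0) : IsPrimitiveRoot (omg L) L := by
  have : omg L = (Complex.exp (2 * Real.pi * Complex.I / L))⁻¹ := by
    rw [omg, ← Complex.exp_neg, neg_div]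
  exact this ▸ (Complex.isPrimitiveRoot_exp L hL).inv

section Fourier

variable (L : ℕ) [NeZero L]

def fourierChar (j : Fin L) : AddChar (Fin L) ℂ where
  toFun k := omg L ^ ((j : ℕ) * (k : ℕ))
  map_zero_eq_one' := by simp
  map_add_eq_mul' a b := by
    have h : (omg L ^ (j : ℕ)) ^ L = 1 := by
      rw [pow_right_comm, (isPrimitiveRoot_omg (NeZero.ne L)).pow_eq_one, one_pow]
    rw [Fin.val_add, pow_mul, ← pow_eq_pow_mod _ h, pow_add, ← pow_mul, ← pow_mul]

@[simp]
theorem fourierChar_apply (j k : Fin L) : fourierChar L j k = omg L ^ ((j : ℕ) * (k : ℕ)) := rfl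

open Fin.CommRing in
theorem fourierChar_surjective : Function.Surjective (fourierChar L) := by
  intro ψ
  have hψ : ψ 1 ^ L = 1 := by
    rw [← AddChar.map_nsmul_eq_pow (x := 1), nsmul_one, Fin.natCast_self,
      AddChar.map_zero_eq_one]
  obtain ⟨j, hj, hωj⟩ := (isPrimitiveRoot_omg (NeZero.ne L)).eq_pow_of_pow_eq_one hψ
  refine ⟨⟨j, hj⟩, ?_⟩
  ext k
  rw [fourierChar_apply, pow_mul, hωj, ← AddChar.map_nsmul_eq_pow (x := 1), nsmul_one,
    Fin.cast_val_eq_self]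

theorem shiftMat_eq_circulant : shiftMat L = circulant (Pi.single 1 1) := by
  ext i j
  simp only [shiftMat, of_apply, circulant_apply, Pi.single_apply, sub_eq_iff_eq_add, Fin.ext_iff,
    Fin.val_add, Fin.val_one', Nat.add_mod_mod, add_comm]

open Fin.CommRing in
theorem shiftMat_pow (n : ℕ) : shiftMat L ^ n = circulant (Pi.single (n : Fin L) 1) := by
  induction n with
  | zero => simp
  | succ n ih =>
    rw [pow_succ, ih, shiftMat_eq_circulant, circulant_single_one_mul_circulant_single_one,
      Nat.cast_succ]

end Fourier

section ThreeLevel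

variable {L₁ L₂ L₃ : ℕ} [NeZero L₁] [NeZero L₂] [NeZero L₃]

theorem sum_shiftMat_pow_kronecker_eq_blockCirculant {n : Type*}
    (B : (Fin L₁ × Fin L₂) × Fin L₃ → Matrix n n ℂ) :
    ∑ k₁ : Fin L₁, ∑ k₂ : Fin L₂, ∑ k₃ : Fin L₃,
      (shiftMat L₁ ^ (k₁ : ℕ)) ⊗ₖ (shiftMat L₂ ^ (k₂ : ℕ)) ⊗ₖ (shiftMat L₃ ^ (k₃ : ℕ)) ⊗ₖ
        B ((k₁, k₂), k₃) =
      blockCirculant B := by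
  simp only [blockCirculant, Fintype.sum_prod_type, shiftMat_pow, Fin.cast_val_eq_self,
    circulant_single_one_kronecker_circulant_single_one]

theorem fourierChar_coprod_surjective :
    Function.Surjective fun j : (Fin L₁ × Fin L₂) × Fin L₃ =>
      ((fourierChar L₁ j.1.1).coprod (fourierChar L₂ j.1.2)).coprod (fourierChar L₃ j.2) :=
  AddChar.coprod_surjective.comp <|
    (AddChar.coprod_surjective.comp <|
      (fourierChar_surjective L₁).prodMap (fourierChar_surjective L₂)).prodMap
      (fourierChar_surjective L₃)

end ThreeLevel

/-- The eigenvalues of a three-level block circulant matrix with rank-1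
Hadamard-separable blocks `A_{k₁k₂k₃} = A^{(1)}_{k₁} ∘ A^{(2)}_{k₂} ∘ A^{(3)}_{k₃}`
are exactly the union, over multi-indices `(j₁,j₂,j₃)`, of the eigenvalues of
the Hadamard products `Ā^{(1)}_{j₁} ∘ Ā^{(2)}_{j₂} ∘ Ā^{(3)}_{j₃}`, where
`Ā^{(ℓ)}_j = Σ_k ω_{L_ℓ}^{jk} A^{(ℓ)}_k`. -/
theorem separable_bcirc_eigenvalues (L₁ L₂ L₃ m₀ : ℕ)
    (h₁ : 1 ≤ L₁) (h₂ : 1 ≤ L₂) (h₃ : 1 ≤ L₃)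
    (A₁ : Fin L₁ → Matrix (Fin m₀) (Fin m₀) ℂ)
    (A₂ : Fin L₂ → Matrix (Fin m₀) (Fin m₀) ℂ)
    (A₃ : Fin L₃ → Matrix (Fin m₀) (Fin m₀) ℂ) (lam : ℂ) :
    (∃ x : ((Fin L₁ × Fin L₂) × Fin L₃) × Fin m₀ → ℂ, x ≠ 0 ∧
        (∑ k₁ : Fin L₁, ∑ k₂ : Fin L₂, ∑ k₃ : Fin L₃,
          (shiftMat L₁ ^ (k₁ : ℕ)) ⊗ₖ (shiftMat L₂ ^ (k₂ : ℕ)) ⊗ₖ (shiftMat L₃ ^ (k₃ : ℕ))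
            ⊗ₖ (A₁ k₁ ⊙ A₂ k₂ ⊙ A₃ k₃)) *ᵥ x = lam • x) ↔
      ∃ j₁ : Fin L₁, ∃ j₂ : Fin L₂, ∃ j₃ : Fin L₃, ∃ u : Fin m₀ → ℂ, u ≠ 0 ∧
        ((∑ k : Fin L₁, omg L₁ ^ ((j₁ : ℕ) * (k : ℕ)) • A₁ k) ⊙
         (∑ k : Fin L₂, omg L₂ ^ ((j₂ : ℕ) * (k : ℕ)) • A₂ k) ⊙
         (∑ k : Fin L₃, omg L₃ ^ ((j₃ : ℕ) * (k : ℕ)) • A₃ k)) *ᵥ u = lam • u := by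
  have : NeZero L₁ := ⟨by omega⟩
  have : NeZero L₂ := ⟨by omega⟩
  have : NeZero L₃ := ⟨by omega⟩
  rw [sum_shiftMat_pow_kronecker_eq_blockCirculant (fun k => A₁ k.1.1 ⊙ A₂ k.1.2 ⊙ A₃ k.2),
    exists_blockCirculant_mulVec_eq_smul_iff, fourierChar_coprod_surjective.exists]
  simp only [Prod.exists, fourierChar_apply,
    AddChar.sum_coprod_smul_hadamard (fun k : Fin L₁ × Fin L₂ => A₁ k.1 ⊙ A₂ k.2) A₃,
    AddChar.sum_coprod_smul_hadamard A₁ A₂]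
end
end
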